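/- arXiv:1507.03520 — 2 statements merged into one kernel-verified Lean document; each statement's English description precedes it below -/
import Mathlib

section
/- For every odd n ≥ 3 and every positive integer k, the pattern (2, 4, ..., 4, 2, 4) consisting of a level of size 2, then k levels of size 4, a level of size 2, and a final level of size 4, is in the Borda range for n voters. -/
/-- The Borda score of alternative `x` under profile `u`, where each voter's
strict linear order is encoded as a ranking bijection (`u i x = k` means `x`
is in position `k+1`, top = position 1). -/
def bordaScore {m n : ℕ} (u : Fin n → (Fin m ≃ Fin m)) (x : Fin m) : ℕ :=
  ∑ i, ((u i x : ℕ) + 1)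

/-- The pattern `p = [m₁, ..., m_T]` is in the Borda range for `n` voters:
some `n`-voter profile of strict linear orders on `p.sum` alternatives has
Borda-score equivalence classes of exactly these cardinalities, ordered by
increasing score. -/
def InBordaRange (n : ℕ) (p : List ℕ) : Prop :=
  ∃ u : Fin n → (Fin p.sum ≃ Fin p.sum), ∃ scores : Fin p.length → ℕ,
    StrictMono scores ∧
    (∀ x, ∃ j, bordaScore u x = scores j) ∧
    ∀ j : Fin p.length,
      (Finset.univ.filter (fun x => bordaScore u x = scores j)).card = p.get j

/-!
Adding a voter together with the reversed order adds `m + 1` to every Borda score, so it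
suffices to treat three voters. Two of them rank the alternatives `0, …, 4k+7` in the natural
order, contributing `2x`; cutting `0, …, 4k+7` into consecutive levels of sizes
`2, 4, …, 4, 2, 4`, the third voter ranks `x` at `c(level x) - 2x`, which makes the score
constant on levels. The level scores `c` are chosen so that this is a permutation: on the
`j`-th level of size four the third voter uses the four numbers of parity `j % 2` in
`[4j - 4, 4j + 3]`, so neighbouring levels interleave.
-/

open Finset

theorem bordaScore_cons_refl_cons_rev {n M : ℕ} (u : Fin n → Equiv.Perm (Fin M)) (x : Fin M) :
    bordaScore (Fin.cons (Equiv.refl _) (Fin.cons Fin.revPerm u)) x = bordaScore u x + (M + 1) := by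
  simp only [bordaScore, Fin.sum_univ_succ, Fin.cons_zero, Fin.cons_succ, Equiv.refl_apply,
    Fin.revPerm_apply, Fin.val_rev]
  omega

theorem InBordaRange.add_two {n : ℕ} {p : List ℕ} (h : InBordaRange n p) :
    InBordaRange (n + 2) p := by
  obtain ⟨u, scores, hmono, hscore, hcard⟩ := h
  refine ⟨Fin.cons (Equiv.refl _) (Fin.cons Fin.revPerm u), fun j => scores j + (p.sum + 1),
    hmono.add_const _, fun x => ?_, fun j => ?_⟩
  · obtain ⟨j, hj⟩ := hscore x
    exact ⟨j, by rw [bordaScore_cons_refl_cons_rev, hj]⟩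
  · simp_rw [bordaScore_cons_refl_cons_rev, add_left_inj]
    exact hcard j

theorem InBordaRange.add_two_mul {n : ℕ} {p : List ℕ} (h : InBordaRange n p) (w : ℕ) :
    InBordaRange (n + 2 * w) p := by
  induction w with
  | zero => exact h
  | succ w ih => exact ih.add_two

theorem card_filter_fin_val {M : ℕ} (P : ℕ → Prop) [DecidablePred P] :
    #{x : Fin M | P x} = #{x ∈ range M | P x} := by
  rw [← Nat.Iio_eq_range, ← Fin.map_valEmbedding_univ, filter_map, card_map]
  rfl

theorem inBordaRange_of_level {n M : ℕ} {p : List ℕ} (hM : p.sum = M)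
    (u : Fin n → Equiv.Perm (Fin M)) (level score : ℕ → ℕ)
    (hlevel : ∀ x < M, level x < p.length) (hmono : StrictMonoOn score (Set.Iio p.length))
    (hborda : ∀ x : Fin M, bordaScore u x = score (level x))
    (hcard : ∀ j (hj : j < p.length), #{x ∈ range M | level x = j} = p[j]) :
    InBordaRange n p := by
  subst hM
  refine ⟨u, fun j => score j, fun i j hij => hmono i.2 j.2 hij,
    fun x => ⟨⟨level x, hlevel x x.2⟩, hborda x⟩, fun j => ?_⟩
  have hfiber : ∀ x : Fin p.sum, bordaScore u x = score j ↔ level x = j := fun x => by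
    rw [hborda, hmono.injOn.eq_iff (hlevel x x.2) j.2]
  simp_rw [hfiber, card_filter_fin_val (fun x => level x = j)]
  exact hcard j j.2

theorem bordaScore_refl_refl {M : ℕ} (σ : Equiv.Perm (Fin M)) (x : Fin M) :
    bordaScore ![Equiv.refl _, Equiv.refl _, σ] x = 2 * x + σ x + 3 := by
  simp only [bordaScore, Fin.sum_univ_three, Matrix.cons_val, Equiv.refl_apply]
  ring

theorem exists_finPerm_val_eq_of_injOn {M : ℕ} {f : ℕ → ℕ}
    (hmaps : Set.MapsTo f (Set.Iio M) (Set.Iio M)) (hinj : Set.InjOn f (Set.Iio M)) :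
    ∃ σ : Equiv.Perm (Fin M), ∀ x, (σ x : ℕ) = f x := by
  let g : Fin M → Fin M := fun x => ⟨f x, hmaps x.2⟩
  have hg : Function.Injective g := fun x y h => Fin.ext (hinj x.2 y.2 (congrArg Fin.val h))
  exact ⟨Equiv.ofBijective g hg.bijective_of_finite, fun x => rfl⟩

namespace TwoFourPattern

def pattern (k : ℕ) : List ℕ := [2] ++ List.replicate k 4 ++ [2, 4]

theorem length_pattern (k : ℕ) : (pattern k).length = k + 3 := by
  simp [pattern]

theorem sum_pattern (k : ℕ) : (pattern k).sum = 4 * k + 8 := by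
  simp [pattern, List.sum_replicate]
  ring

theorem getElem_pattern (k j : ℕ) (hj : j < (pattern k).length) :
    (pattern k)[j] = if j = 0 ∨ j = k + 1 then 2 else 4 := by
  have hj' : j < k + 3 := length_pattern k ▸ hj
  simp only [pattern, List.append_assoc, List.getElem_append, List.getElem_cons,
    List.getElem_replicate, List.length_replicate, List.length_singleton]
  split_ifs <;> omega

def level (k x : ℕ) : ℕ :=
  if x < 2 then 0 else if x < 4 * k + 2 then (x + 2) / 4
  else if x < 4 * k + 4 then k + 1 else k + 2

def levelStart (k j : ℕ) : ℕ :=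
  if j = 0 then 0 else if j ≤ k + 1 then 4 * j - 2 else if j = k + 2 then 4 * k + 4 else 4 * k + 8

def levelScore (k j : ℕ) : ℕ :=
  if j = 0 then 2 else if j ≤ k then 12 * j - 2 + j % 2
  else if j = k + 1 then 12 * k + 10 + k % 2 else 12 * k + 14 + (k + 1) % 2

def thirdRank (k x : ℕ) : ℕ := levelScore k (level k x) - 2 * x

theorem level_lt (k x : ℕ) : level k x < k + 3 := by
  unfold level
  split_ifs <;> omega

theorem level_eq_iff {k j : ℕ} (hj : j < k + 3) (x : ℕ) :
    x < 4 * k + 8 ∧ level k x = j ↔ levelStart k j ≤ x ∧ x < levelStart k (j + 1) := by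
  unfold level levelStart
  split_ifs <;> (try contradiction) <;> omega

theorem card_level_eq {k j : ℕ} (hj : j < k + 3) :
    #{x ∈ range (4 * k + 8) | level k x = j} = if j = 0 ∨ j = k + 1 then 2 else 4 := by
  have hfiber : {x ∈ range (4 * k + 8) | level k x = j} =
      Ico (levelStart k j) (levelStart k (j + 1)) := by
    ext x
    rw [mem_filter, mem_range, mem_Ico, level_eq_iff hj]
  rw [hfiber, Nat.card_Ico]
  unfold levelStart
  split_ifs <;> (try contradiction) <;> omega

theorem levelScore_strictMonoOn (k : ℕ) : StrictMonoOn (levelScore k) (Set.Iio (k + 3)) := by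
  intro i hi j hj hij
  simp only [Set.mem_Iio] at hi hj
  unfold levelScore
  split_ifs <;> omega

theorem two_mul_add_thirdRank {k x : ℕ} (hx : x < 4 * k + 8) :
    2 * x + thirdRank k x = levelScore k (level k x) := by
  unfold thirdRank levelScore level
  split_ifs <;> (try contradiction) <;> omega

theorem thirdRank_cases {k x : ℕ} (hx : x < 4 * k + 8) :
    (x < 2 ∧ thirdRank k x = 2 - 2 * x) ∨
    (2 ≤ x ∧ x < 4 * k + 2 ∧ thirdRank k x = 12 * ((x + 2) / 4) - 2 + (x + 2) / 4 % 2 - 2 * x) ∨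
    (4 * k + 2 ≤ x ∧ x < 4 * k + 4 ∧ thirdRank k x = 12 * k + 10 + k % 2 - 2 * x) ∨
    (4 * k + 4 ≤ x ∧ thirdRank k x = 12 * k + 14 + (k + 1) % 2 - 2 * x) := by
  unfold thirdRank levelScore level
  split_ifs <;> (try contradiction) <;> omega

theorem mapsTo_thirdRank (k : ℕ) :
    Set.MapsTo (thirdRank k) (Set.Iio (4 * k + 8)) (Set.Iio (4 * k + 8)) := by
  intro x hx
  rw [Set.mem_Iio] at hx ⊢
  rcases thirdRank_cases hx with h | h | h | h <;> omega

theorem injOn_thirdRank (k : ℕ) : Set.InjOn (thirdRank k) (Set.Iio (4 * k + 8)) := by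
  intro x hx y hy h
  rw [Set.mem_Iio] at hx hy
  rcases thirdRank_cases hx with hcx | hcx | hcx | hcx <;>
    rcases thirdRank_cases hy with hcy | hcy | hcy | hcy <;> omega

theorem inBordaRange_three (k : ℕ) : InBordaRange 3 (pattern k) := by
  obtain ⟨σ, hσ⟩ := exists_finPerm_val_eq_of_injOn (mapsTo_thirdRank k) (injOn_thirdRank k)
  refine inBordaRange_of_level (sum_pattern k) ![Equiv.refl _, Equiv.refl _, σ] (level k)
    (fun j => levelScore k j + 3) (fun x _ => length_pattern k ▸ level_lt k x) ?_ ?_ ?_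
  · rw [length_pattern]
    exact (levelScore_strictMonoOn k).add_const 3
  · intro x
    rw [bordaScore_refl_refl, hσ, two_mul_add_thirdRank x.2]
  · intro j hj
    rw [getElem_pattern, card_level_eq (length_pattern k ▸ hj)]

end TwoFourPattern

theorem stmt12_general (n : ℕ) (hn : Odd n) (hn3 : 3 ≤ n) (k : ℕ) :
    InBordaRange n ([2] ++ List.replicate k 4 ++ [2, 4]) := by
  obtain ⟨w, rfl⟩ : ∃ w, n = 3 + 2 * w := by
    obtain ⟨t, rfl⟩ := hn
    exact ⟨t - 1, by omega⟩
  exact (TwoFourPattern.inBordaRange_three k).add_two_mul w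

theorem stmt12 (n : ℕ) (hn : Odd n) (hn3 : 3 ≤ n) (k : ℕ) (hk : 1 ≤ k) :
    InBordaRange n ([2] ++ List.replicate k 4 ++ [2, 4]) :=
  stmt12_general n hn hn3 k
end

section
/- If every entry of the pattern (m_1,...,m_T) equals 2 or 4 and the number of entries equal to 2 is odd, then (m_1,...,m_T) is not in the Borda range for any odd number n of voters. -/
/-! The total Borda score is `n · m(m+1)/2` for `m` alternatives. Entries `2` and `4` with an odd
number of `2`s force `m ≡ 2 (mod 4)`, so `m(m+1)/2 = (m/2)(m+1)` is odd, and so is the total for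
odd `n`. But the total is also `∑ⱼ scoreⱼ · mⱼ`, which is even since every class size `mⱼ` is. -/

open Finset

lemma List.sum_mod_four_of_forall_eq_two_or_four {p : List ℕ} (h : ∀ x ∈ p, x = 2 ∨ x = 4) :
    p.sum % 4 = 2 * p.count 2 % 4 := by
  induction p with
  | nil => simp
  | cons a t ih =>
    have ht := ih fun x hx => h x (List.mem_cons_of_mem _ hx)
    rcases h a List.mem_cons_self with rfl | rfl <;> simp <;> omega

lemma even_sum_of_even_card_fibers {α : Type*} [Fintype α] (f : α → ℕ)
    (h : ∀ x, Even #{y | f y = f x}) : Even (∑ x, f x) := by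
  rw [sum_comp (fun b => b) f]
  refine even_sum _ fun b hb => ?_
  obtain ⟨x, -, rfl⟩ := mem_image.mp hb
  rw [smul_eq_mul]
  exact (h x).mul_right _

lemma sum_bordaScore_mul_two {m n : ℕ} (u : Fin n → (Fin m ≃ Fin m)) :
    (∑ x, bordaScore u x) * 2 = n * (m * (m + 1)) := by
  have gauss : (∑ k : Fin m, ((k : ℕ) + 1)) * 2 = m * (m + 1) := by
    have := sum_range_id_mul_two (m + 1)
    rw [sum_range_succ'] at this
    rw [Fin.sum_univ_eq_sum_range (· + 1)]
    simpa [mul_comm] using this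
  simp only [bordaScore]
  rw [sum_comm, sum_congr rfl fun i _ => Equiv.sum_comp (u i) fun k => (k : ℕ) + 1,
    sum_const, card_univ, Fintype.card_fin, smul_eq_mul, mul_assoc, gauss]

lemma odd_sum_bordaScore {m n : ℕ} (u : Fin n → (Fin m ≃ Fin m)) (hn : Odd n)
    (hm : m % 4 = 2) : Odd (∑ x, bordaScore u x) := by
  obtain ⟨c, rfl⟩ : ∃ c, m = 2 * c := ⟨m / 2, by omega⟩
  have hc : Odd c := Nat.odd_iff.mpr (by omega)
  have htotal : ∑ x, bordaScore u x = n * (c * (2 * c + 1)) := by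
    apply Nat.eq_of_mul_eq_mul_right two_pos
    rw [sum_bordaScore_mul_two]
    ring
  rw [htotal]
  exact hn.mul (hc.mul (odd_two_mul_add_one c))

lemma InBordaRange.exists_card_fiber_mem {n : ℕ} {p : List ℕ} (h : InBordaRange n p) :
    ∃ u : Fin n → (Fin p.sum ≃ Fin p.sum),
      ∀ x, #{y | bordaScore u y = bordaScore u x} ∈ p := by
  obtain ⟨u, scores, -, hcover, hcard⟩ := h
  refine ⟨u, fun x => ?_⟩
  obtain ⟨j, hj⟩ := hcover x
  rw [hj, hcard j]
  exact p.get_mem j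

theorem stmt15 (p : List ℕ) (h24 : ∀ x ∈ p, x = 2 ∨ x = 4)
    (hodd : Odd (p.count 2)) (n : ℕ) (hn : Odd n) :
    ¬ InBordaRange n p := by
  intro h
  obtain ⟨u, hfiber⟩ := h.exists_card_fiber_mem
  have hsum : p.sum % 4 = 2 := by
    obtain ⟨k, hk⟩ := hodd
    have := List.sum_mod_four_of_forall_eq_two_or_four h24
    omega
  have heven : Even (∑ x, bordaScore u x) :=
    even_sum_of_even_card_fibers _ fun x => by
      rcases h24 _ (hfiber x) with h | h <;> rw [h] <;> decide
  exact Nat.not_even_iff_odd.mpr (odd_sum_bordaScore u hn hsum) heven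
end
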